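/- Let m ≥ 1 and let A_0, …, A_{m-1} be entire functions with ρ(A_k) ≤ ρ' < ∞ for all k = 0, 1, …, m-1. Then every entire solution f of the homogeneous linear differential equation f^{(m)} + A_{m-1} f^{(m-1)} + … + A_1 f' + A_0 f = 0 satisfies ρ₂(f) ≤ ρ'. -/

import Mathlib

open Filter MeasureTheory Metric Real Set Classical ENNReal NNReal

noncomputable section

/-- Maximum modulus `M(r,f)` of a function on the circle of radius `r`. -/
def maxMod (f : ℂ → ℂ) (r : ℝ) : ℝ :=
  sSup ((fun z => ‖f z‖) '' Metric.sphere (0 : ℂ) r)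

/-- Order of growth `ρ(f) = limsup_{r→∞} log log M(r,f) / log r` (an extended real). -/
def growthOrder (f : ℂ → ℂ) : EReal :=
  Filter.limsup (fun r : ℝ =>
    ((Real.log (Real.log (maxMod f r)) / Real.log r : ℝ) : EReal)) Filter.atTop

/-- Hyper-order `ρ₂(f) = limsup_{r→∞} log log log M(r,f) / log r`. -/
def hyperOrder (f : ℂ → ℂ) : EReal :=
  Filter.limsup (fun r : ℝ =>
    ((Real.log (Real.log (Real.log (maxMod f r))) / Real.log r : ℝ) : EReal)) Filter.atTop

/-- Number of zeros of `f` (with multiplicity) in the closed disc `|z| ≤ r`. -/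
def zeroCount (f : ℂ → ℂ) (r : ℝ) : ℝ≥0∞ :=
  ∑' z : Metric.closedBall (0 : ℂ) r,
    if h : AnalyticAt ℂ f (z : ℂ) then (analyticOrderAt f (z : ℂ) : ℝ≥0∞) else 0

/-- Exponent of convergence of zeros `λ(f) = limsup_{r→∞} log n(r,1/f) / log r`. -/
def zeroExponent (f : ℂ → ℂ) : EReal :=
  Filter.limsup (fun r : ℝ =>
    ((Real.log (zeroCount f r).toReal / Real.log r : ℝ) : EReal)) Filter.atTop

/-- A function is a polynomial function. -/
def IsPolynomialFun (f : ℂ → ℂ) : Prop := ∃ p : Polynomial ℂ, ∀ z, f z = p.eval z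

/-- A function is a rational function. -/
def IsRationalFun (f : ℂ → ℂ) : Prop :=
  ∃ p q : Polynomial ℂ, q ≠ 0 ∧ ∀ z, q.eval z ≠ 0 → f z = p.eval z / q.eval z

/-- Positive part of the logarithm. -/
def logPlus (x : ℝ) : ℝ := max (Real.log x) 0

/-- The point `r e^{iθ}`. -/
def circlePoint (r θ : ℝ) : ℂ := (r : ℂ) * Complex.exp ((θ : ℂ) * Complex.I)

/-- Nevanlinna proximity function `m(r,f)`. -/
def proxim (f : ℂ → ℂ) (r : ℝ) : ℝ :=
  (2 * Real.pi)⁻¹ * ∫ θ in (0:ℝ)..(2 * Real.pi), logPlus (‖f (circlePoint r θ)‖)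

/-- Number of poles of `f` (with multiplicity) in the closed disc `|z| ≤ r`. -/
def poleCount (f : ℂ → ℂ) (r : ℝ) : ℝ≥0∞ :=
  ∑' z : Metric.closedBall (0 : ℂ) r,
    if h : MeromorphicAt f (z : ℂ) then (((-((meromorphicOrderAt f (z : ℂ)).untopD 0)).toNat : ℕ) : ℝ≥0∞) else 0

/-- Integrated counting function of poles `N(r,f)`. -/
def nevN (f : ℂ → ℂ) (r : ℝ) : ℝ :=
  (∫ t in (0:ℝ)..r, ((poleCount f t).toReal - (poleCount f 0).toReal) / t)
    + (poleCount f 0).toReal * Real.log r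

/-- Integrated counting function of zeros `N(r,1/f)`. -/
def nevNzeros (f : ℂ → ℂ) (r : ℝ) : ℝ :=
  (∫ t in (0:ℝ)..r, ((zeroCount f t).toReal - (zeroCount f 0).toReal) / t)
    + (zeroCount f 0).toReal * Real.log r

/-- Nevanlinna characteristic `T(r,f) = m(r,f) + N(r,f)`. -/
def nevT (f : ℂ → ℂ) (r : ℝ) : ℝ := proxim f r + nevN f r

/-- Order of growth of a meromorphic function, `limsup log T(r,f)/log r`. -/
def meroOrder (f : ℂ → ℂ) : EReal :=
  Filter.limsup (fun r : ℝ =>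
    ((Real.log (nevT f r) / Real.log r : ℝ) : EReal)) Filter.atTop

/-- Nevanlinna deficiency `δ(c,f) = liminf_{r→∞} m(r,1/(f-c)) / T(r,f)`. -/
def deficiency (f : ℂ → ℂ) (c : ℂ) : ℝ :=
  Filter.liminf (fun r => proxim (fun z => (f z - c)⁻¹) r / nevT f r) Filter.atTop

/-- Logarithmic measure of a set `E ⊆ (1,∞)`. -/
def logMeasure (E : Set ℝ) : ℝ≥0∞ := ∫⁻ t in E, ENNReal.ofReal t⁻¹

/-- The quotient `(∫_{S ∩ (1,r)} dt/t) / log r`. -/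
def logDensQuot (S : Set ℝ) (r : ℝ) : ℝ :=
  (∫ t in S ∩ Set.Ioo 1 r, t⁻¹) / Real.log r

/-- Lower logarithmic density of `S ⊆ (1,∞)`. -/
def lowerLogDens (S : Set ℝ) : ℝ := Filter.liminf (logDensQuot S) Filter.atTop

/-- Upper logarithmic density of `S ⊆ (1,∞)`. -/
def upperLogDens (S : Set ℝ) : ℝ := Filter.limsup (logDensQuot S) Filter.atTop

/-- Taylor coefficient of an entire function at the origin. -/
def taylorCoeff (f : ℂ → ℂ) (n : ℕ) : ℂ := iteratedDeriv n f 0 / (n.factorial : ℂ)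

/-- Maximal term of the Taylor series of `f`. -/
def maxTerm (f : ℂ → ℂ) (r : ℝ) : ℝ := ⨆ n : ℕ, ‖taylorCoeff f n‖ * r ^ n

/-- Central index `ν(r,f)`: the largest index realizing the maximal term. -/
def centralIndex (f : ℂ → ℂ) (r : ℝ) : ℕ :=
  sSup {n : ℕ | ‖taylorCoeff f n‖ * r ^ n = maxTerm f r}

/-- `δ(P,θ) = Re(a_n e^{inθ})` where `a_n` is the leading coefficient of `P`. -/
def deltaPol (P : Polynomial ℂ) (θ : ℝ) : ℝ :=
  (P.leadingCoeff * Complex.exp ((P.natDegree : ℂ) * (θ : ℂ) * Complex.I)).re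

end


section Aux

open Filter Metric

lemma maxMod_nonneg (f : ℂ → ℂ) (r : ℝ) : 0 ≤ maxMod f r := by
  apply Real.sSup_nonneg
  rintro x ⟨z, -, rfl⟩
  exact norm_nonneg _

lemma abs_le_maxMod {f : ℂ → ℂ} (hf : Continuous f) (z : ℂ) :
    ‖f z‖ ≤ maxMod f (‖z‖) := by
  apply le_csSup
  · exact ((isCompact_sphere (0 : ℂ) _).image (continuous_norm.comp hf)).bddAbove
  · exact ⟨z, by simp [mem_sphere_zero_iff_norm], rfl⟩

lemma maxMod_le {f : ℂ → ℂ} {r C : ℝ} (hC : 0 ≤ C)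
    (h : ∀ z : ℂ, ‖z‖ = r → ‖f z‖ ≤ C) : maxMod f r ≤ C := by
  apply Real.sSup_le _ hC
  rintro x ⟨z, hz, rfl⟩
  exact h z (by simpa [mem_sphere_zero_iff_norm] using hz)

lemma abs_le_maxMod_of_le {f : ℂ → ℂ} (hf : Differentiable ℂ f) {z : ℂ} {r : ℝ}
    (hz : ‖z‖ ≤ r) : ‖f z‖ ≤ maxMod f r := by
  rcases eq_or_lt_of_le hz with h | h
  · exact h ▸ abs_le_maxMod hf.continuous z
  · have hr : 0 < r := lt_of_le_of_lt (norm_nonneg z) h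
    have hb : ∀ w ∈ frontier (Metric.ball (0 : ℂ) r), ‖f w‖ ≤ maxMod f r := by
      intro w hw
      rw [frontier_ball (0 : ℂ) hr.ne'] at hw
      have hw' : ‖w‖ = r := by
        simpa [mem_sphere_zero_iff_norm] using hw
      simpa [hw'] using abs_le_maxMod hf.continuous w
    have hcl : z ∈ closure (Metric.ball (0 : ℂ) r) := by
      rw [closure_ball (0 : ℂ) hr.ne']
      simpa [mem_closedBall_zero_iff] using hz
    simpa using
      Complex.norm_le_of_forall_mem_frontier_norm_le isBounded_ball hf.diffContOnCl hb hcl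

lemma maxMod_mono {f : ℂ → ℂ} (hf : Differentiable ℂ f) {r R : ℝ} (hr : 0 ≤ r)
    (hR : r ≤ R) : maxMod f r ≤ maxMod f R := by
  apply maxMod_le (maxMod_nonneg f R)
  intro z hz
  exact abs_le_maxMod_of_le hf (by rw [hz]; exact hR)

lemma maxMod_const (c : ℂ) {r : ℝ} (hr : 0 ≤ r) : maxMod (fun _ => c) r = ‖c‖ := by
  have hne : (Metric.sphere (0 : ℂ) r).Nonempty := NormedSpace.sphere_nonempty.mpr hr
  unfold maxMod
  rw [show (fun z : ℂ => ‖c‖) '' Metric.sphere (0 : ℂ) r = {‖c‖} from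
    hne.image_const _, csSup_singleton]

lemma limsup_const_div_log (a : ℝ) :
    Filter.limsup (fun r : ℝ => ((a / Real.log r : ℝ) : EReal)) Filter.atTop = 0 := by
  have h : Filter.Tendsto (fun r : ℝ => a / Real.log r) Filter.atTop (nhds 0) :=
    Filter.Tendsto.div_atTop tendsto_const_nhds Real.tendsto_log_atTop
  have h2 : Filter.Tendsto (fun r : ℝ => ((a / Real.log r : ℝ) : EReal)) Filter.atTop
      (nhds ((0 : ℝ) : EReal)) := EReal.tendsto_coe.mpr h
  simpa using h2.limsup_eq

lemma deriv_entire {g : ℂ → ℂ} (hg : Differentiable ℂ g) : Differentiable ℂ (deriv g) := by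
  have h : AnalyticOnNhd ℂ g Set.univ :=
    hg.differentiableOn.analyticOnNhd isOpen_univ
  exact fun z => (h.deriv z (Set.mem_univ z)).differentiableAt

lemma iteratedDeriv_entire {f : ℂ → ℂ} (hf : Differentiable ℂ f) (n : ℕ) :
    Differentiable ℂ (iteratedDeriv n f) := by
  induction n with
  | zero => simpa [iteratedDeriv_zero] using hf
  | succ n ih => rw [iteratedDeriv_succ]; exact deriv_entire ih

lemma growthOrder_nonneg {g : ℂ → ℂ} (hg : Differentiable ℂ g) :
    (0 : EReal) ≤ growthOrder g := by
  by_cases hbig : ∃ r0 : ℝ, 1 ≤ r0 ∧ Real.exp 1 ≤ maxMod g r0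
  · obtain ⟨r0, hr01, hr0⟩ := hbig
    have hev : ∀ᶠ r : ℝ in Filter.atTop,
        (0 : EReal) ≤ ((Real.log (Real.log (maxMod g r)) / Real.log r : ℝ) : EReal) := by
      filter_upwards [Filter.eventually_ge_atTop (max r0 2)] with r hr
      have hr2 : (2 : ℝ) ≤ r := le_trans (le_max_right _ _) hr
      have hrr0 : r0 ≤ r := le_trans (le_max_left _ _) hr
      have hM : Real.exp 1 ≤ maxMod g r :=
        le_trans hr0 (maxMod_mono hg (by linarith) hrr0)
      have hM0 : 0 < maxMod g r := lt_of_lt_of_le (Real.exp_pos 1) hM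
      have h1 : 1 ≤ Real.log (maxMod g r) := (Real.le_log_iff_exp_le hM0).mpr hM
      have h2 : 0 ≤ Real.log (Real.log (maxMod g r)) := Real.log_nonneg h1
      have h3 : 0 ≤ Real.log r := Real.log_nonneg (by linarith)
      exact EReal.coe_nonneg.mpr (div_nonneg h2 h3)
    exact Filter.le_limsup_of_frequently_le hev.frequently
  · push_neg at hbig
    have hb : ∀ z : ℂ, ‖g z‖ ≤ Real.exp 1 := by
      intro z
      have h1 : ‖z‖ ≤ ‖z‖ + 1 := by linarith
      have h2 : (1 : ℝ) ≤ ‖z‖ + 1 := by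
        have := norm_nonneg z; linarith
      exact le_of_lt (lt_of_le_of_lt (abs_le_maxMod_of_le hg h1) (hbig _ h2))
    obtain ⟨c, hc⟩ := hg.exists_const_forall_eq_of_bounded
      (isBounded_iff_forall_norm_le.mpr ⟨Real.exp 1, by
        rintro x ⟨z, rfl⟩; simpa using hb z⟩)
    have heq : growthOrder g = 0 := by
      unfold growthOrder
      have hev : ∀ᶠ r : ℝ in Filter.atTop,
          ((Real.log (Real.log (maxMod g r)) / Real.log r : ℝ) : EReal)
          = ((Real.log (Real.log (‖c‖)) / Real.log r : ℝ) : EReal) := by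
        filter_upwards [Filter.eventually_ge_atTop (0 : ℝ)] with r hr
        rw [show g = fun _ => c from funext hc, maxMod_const c hr]
      rw [Filter.limsup_congr hev, limsup_const_div_log]
    rw [heq]

lemma eventually_maxMod_le_exp_rpow {g : ℂ → ℂ} {p s : ℝ}
    (hg : growthOrder g ≤ (p : EReal)) (hs : p < s) :
    ∀ᶠ r : ℝ in Filter.atTop, maxMod g r ≤ Real.exp (r ^ s) := by
  have hlt : growthOrder g < (s : EReal) :=
    lt_of_le_of_lt hg (EReal.coe_lt_coe_iff.mpr hs)
  have hev := Filter.eventually_lt_of_limsup_lt hlt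
  filter_upwards [hev, Filter.eventually_gt_atTop (1 : ℝ)] with r hqr hr1
  have hr0 : (0 : ℝ) < r := by linarith
  have hlogr : 0 < Real.log r := Real.log_pos hr1
  have hq : Real.log (Real.log (maxMod g r)) / Real.log r < s := EReal.coe_lt_coe_iff.mp hqr
  have h1 : Real.log (Real.log (maxMod g r)) < s * Real.log r := (div_lt_iff₀ hlogr).mp hq
  have hrs : 0 < r ^ s := Real.rpow_pos_of_pos hr0 s
  by_cases hM : maxMod g r ≤ 1
  · exact hM.trans (Real.one_le_exp hrs.le)
  · push_neg at hM
    have hM0 : 0 < maxMod g r := by linarith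
    have hlM : 0 < Real.log (maxMod g r) := Real.log_pos hM
    have h2 : Real.log (maxMod g r) < r ^ s := by
      have h3 : Real.log (maxMod g r) < Real.exp (s * Real.log r) :=
        (Real.log_lt_iff_lt_exp hlM).mp h1
      rwa [show Real.exp (s * Real.log r) = r ^ s by
        rw [Real.rpow_def_of_pos hr0, mul_comm]] at h3
    exact le_of_lt ((Real.log_lt_iff_lt_exp hM0).mp h2)

lemma sol_maxMod_bound (m : ℕ) (hm : 1 ≤ m) (A : ℕ → ℂ → ℂ)
    (hAent : ∀ k < m, Differentiable ℂ (A k))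
    (f : ℂ → ℂ) (hf : Differentiable ℂ f)
    (hsol : ∀ z, iteratedDeriv m f z
        + ∑ k ∈ Finset.range m, A k z * iteratedDeriv k f z = 0)
    {r : ℝ} (hr : 0 ≤ r) :
    maxMod f r ≤ ‖(fun j : Fin m => iteratedDeriv (j : ℕ) f 0)‖ *
      Real.exp ((1 + ∑ k ∈ Finset.range m, maxMod (A k) r) * r) := by
  set B := ‖(fun j : Fin m => iteratedDeriv (j : ℕ) f 0)‖ with hBdef
  set K := 1 + ∑ k ∈ Finset.range m, maxMod (A k) r with hKdef
  have hKsum : 0 ≤ ∑ k ∈ Finset.range m, maxMod (A k) r :=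
    Finset.sum_nonneg fun k _ => maxMod_nonneg _ _
  have hK1 : 1 ≤ K := by rw [hKdef]; linarith
  have hB0 : 0 ≤ B := norm_nonneg _
  apply maxMod_le (by positivity)
  intro z hz
  set c : ℂ := Complex.exp ((Complex.arg z : ℂ) * Complex.I) with hc
  have hcabs : ‖c‖ = 1 := Complex.norm_exp_ofReal_mul_I _
  set Y : ℝ → Fin m → ℂ := fun t j => iteratedDeriv (j : ℕ) f ((t : ℂ) * c) with hYdef
  set Y' : ℝ → Fin m → ℂ := fun t j => c * iteratedDeriv ((j : ℕ) + 1) f ((t : ℂ) * c)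
    with hY'def
  have hray : ∀ t : ℝ, HasDerivAt (fun u : ℝ => (u : ℂ) * c) c t := by
    intro t
    have h1 : HasDerivAt (fun u : ℝ => (u : ℂ)) 1 t := by
      exact Complex.ofRealCLM.hasDerivAt (x := t)
    simpa using h1.mul_const c
  have hY : ∀ t : ℝ, HasDerivAt Y (Y' t) t := by
    intro t
    rw [hasDerivAt_pi]
    intro j
    have hd : HasDerivAt (iteratedDeriv (j : ℕ) f)
        (iteratedDeriv ((j : ℕ) + 1) f ((t : ℂ) * c)) ((t : ℂ) * c) := by
      have h1 := (iteratedDeriv_entire hf (j : ℕ) ((t : ℂ) * c)).hasDerivAt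
      rwa [← iteratedDeriv_succ] at h1
    have h2 := HasDerivAt.scomp (𝕜 := ℝ) (𝕜' := ℂ) t hd (hray t)
    exact h2
  have hbound : ∀ t ∈ Set.Ico (0 : ℝ) r, ‖Y' t‖ ≤ K * ‖Y t‖ + 0 := by
    intro t ht
    rw [add_zero]
    have ht0 : 0 ≤ t := ht.1
    have htr : t ≤ r := le_of_lt ht.2
    have hzt : ‖(t : ℂ) * c‖ ≤ r := by
      rw [norm_mul, hcabs, mul_one, Complex.norm_real, Real.norm_eq_abs, abs_of_nonneg ht0]
      exact htr
    have hKY : 0 ≤ K * ‖Y t‖ := mul_nonneg (by linarith) (norm_nonneg _)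
    rw [pi_norm_le_iff_of_nonneg hKY]
    intro j
    have hYj : ∀ (k : ℕ), k < m → ‖iteratedDeriv k f ((t : ℂ) * c)‖ ≤ ‖Y t‖ := by
      intro k hk
      have h1 := norm_le_pi_norm (Y t) ⟨k, hk⟩
      simpa [hYdef] using h1
    have hY'j : ‖Y' t j‖ = ‖iteratedDeriv ((j : ℕ) + 1) f ((t : ℂ) * c)‖ := by
      simp [hY'def, norm_mul, hcabs]
    rcases lt_or_eq_of_le (Nat.succ_le_of_lt j.2) with hjm | hjm
    all_goals rw [Nat.succ_eq_add_one] at hjm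
    · calc ‖Y' t j‖ = _ := hY'j
        _ ≤ ‖Y t‖ := hYj _ hjm
        _ ≤ K * ‖Y t‖ := le_mul_of_one_le_left (norm_nonneg _) hK1
    · have hsolz := hsol ((t : ℂ) * c)
      have heq : iteratedDeriv m f ((t : ℂ) * c)
          = -∑ k ∈ Finset.range m, A k ((t : ℂ) * c) * iteratedDeriv k f ((t : ℂ) * c) := by
        linear_combination hsolz
      rw [hY'j, hjm, heq]
      have hsum : ‖∑ k ∈ Finset.range m,
            A k ((t : ℂ) * c) * iteratedDeriv k f ((t : ℂ) * c)‖
          ≤ ∑ k ∈ Finset.range m, maxMod (A k) r * ‖Y t‖ := by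
        calc ‖∑ k ∈ Finset.range m,
              A k ((t : ℂ) * c) * iteratedDeriv k f ((t : ℂ) * c)‖
            ≤ ∑ k ∈ Finset.range m,
              ‖A k ((t : ℂ) * c) * iteratedDeriv k f ((t : ℂ) * c)‖ := by
              simpa using
                norm_sum_le (Finset.range m)
                  (fun k => A k ((t : ℂ) * c) * iteratedDeriv k f ((t : ℂ) * c))
          _ ≤ ∑ k ∈ Finset.range m, maxMod (A k) r * ‖Y t‖ := by
              apply Finset.sum_le_sum
              intro k hk
              rw [norm_mul]
              exact mul_le_mul
                (abs_le_maxMod_of_le (hAent k (Finset.mem_range.mp hk)) hzt)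
                (hYj k (Finset.mem_range.mp hk)) (norm_nonneg _)
                (maxMod_nonneg _ _)
      calc ‖-∑ k ∈ Finset.range m,
            A k ((t : ℂ) * c) * iteratedDeriv k f ((t : ℂ) * c)‖
          = ‖∑ k ∈ Finset.range m,
            A k ((t : ℂ) * c) * iteratedDeriv k f ((t : ℂ) * c)‖ := norm_neg _
        _ ≤ ∑ k ∈ Finset.range m, maxMod (A k) r * ‖Y t‖ := hsum
        _ = (∑ k ∈ Finset.range m, maxMod (A k) r) * ‖Y t‖ := by rw [Finset.sum_mul]
        _ ≤ K * ‖Y t‖ := by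
            apply mul_le_mul_of_nonneg_right _ (norm_nonneg _)
            rw [hKdef]; linarith
  have hY0 : ‖Y 0‖ ≤ B := by
    rw [hBdef]
    apply le_of_eq
    congr 1
    funext j
    simp [hYdef]
  have key := norm_le_gronwallBound_of_norm_deriv_right_le
    (f := Y) (f' := Y') (δ := B) (K := K) (ε := 0) (a := 0) (b := r)
    (fun t _ => (hY t).continuousAt.continuousWithinAt)
    (fun t _ => (hY t).hasDerivWithinAt)
    hY0 hbound r (Set.right_mem_Icc.mpr hr)
  rw [sub_zero, gronwallBound_ε0] at key
  have hfz : ‖f z‖ ≤ ‖Y r‖ := by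
    have h1 : Y r ⟨0, hm⟩ = f z := by
      have h2 : ((r : ℂ)) * c = z := by
        rw [← hz]; exact Complex.norm_mul_exp_arg_mul_I z
      simp [hYdef, h2]
    have h3 := norm_le_pi_norm (Y r) ⟨0, hm⟩
    rw [h1] at h3
    simpa using h3
  calc ‖f z‖ ≤ ‖Y r‖ := hfz
    _ ≤ B * Real.exp (K * r) := key

end Aux

theorem hyper_order_bound_homogeneous
    (m : ℕ) (hm : 1 ≤ m) (A : ℕ → ℂ → ℂ)
    (hAent : ∀ k < m, Differentiable ℂ (A k))
    (ρ' : ℝ) (hord : ∀ k < m, growthOrder (A k) ≤ (ρ' : EReal))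
    (f : ℂ → ℂ) (hf : Differentiable ℂ f)
    (hsol : ∀ z, iteratedDeriv m f z
        + ∑ k ∈ Finset.range m, A k z * iteratedDeriv k f z = 0) :
    hyperOrder f ≤ (ρ' : EReal) := by
  have hρ0 : (0 : ℝ) ≤ ρ' := by
    have h1 := growthOrder_nonneg (hAent 0 hm)
    have h2 := hord 0 hm
    exact_mod_cast le_trans h1 h2
  by_cases hconst : ∃ c : ℂ, ∀ z, f z = c
  · obtain ⟨c, hc⟩ := hconst
    have heq : hyperOrder f = 0 := by
      unfold hyperOrder
      have hev : ∀ᶠ r : ℝ in Filter.atTop,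
          ((Real.log (Real.log (Real.log (maxMod f r))) / Real.log r : ℝ) : EReal)
          = ((Real.log (Real.log (Real.log (‖c‖))) / Real.log r : ℝ) : EReal) := by
        filter_upwards [Filter.eventually_ge_atTop (0 : ℝ)] with r hr
        rw [show f = fun _ => c from funext hc, maxMod_const c hr]
      rw [Filter.limsup_congr hev, limsup_const_div_log]
    rw [heq]
    exact_mod_cast hρ0
  · push_neg at hconst
    have hbig : ∃ r0 : ℝ, 1 ≤ r0 ∧ Real.exp (Real.exp 1) ≤ maxMod f r0 := by
      by_contra hcon
      push_neg at hcon
      have hb : ∀ z : ℂ, ‖f z‖ ≤ Real.exp (Real.exp 1) := by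
        intro z
        have h1 : ‖z‖ ≤ ‖z‖ + 1 := by linarith
        have h2 : (1 : ℝ) ≤ ‖z‖ + 1 := by
          have := norm_nonneg z; linarith
        exact le_of_lt (lt_of_le_of_lt (abs_le_maxMod_of_le hf h1) (hcon _ h2))
      obtain ⟨c, hc⟩ := hf.exists_const_forall_eq_of_bounded
        (isBounded_iff_forall_norm_le.mpr ⟨Real.exp (Real.exp 1), by
          rintro x ⟨z, rfl⟩; simpa using hb z⟩)
      obtain ⟨z, hz⟩ := hconst c
      exact hz (hc z)
    obtain ⟨r0, hr01, hr0⟩ := hbig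
    suffices hsuf : ∀ t : ℝ, ρ' < t → hyperOrder f ≤ (t : EReal) by
      by_contra hcon
      push_neg at hcon
      obtain ⟨t, ht1, ht2⟩ := EReal.exists_between_coe_real hcon
      exact absurd (hsuf t (EReal.coe_lt_coe_iff.mp ht1)) (not_le.mpr ht2)
    intro t ht
    set s := (ρ' + t) / 2 with hsdef
    have hρs : ρ' < s := by rw [hsdef]; linarith
    have hst : s < t := by rw [hsdef]; linarith
    have hs0 : 0 < s := by rw [hsdef]; linarith
    have hA : ∀ᶠ r : ℝ in Filter.atTop,
        ∀ k ∈ Finset.range m, maxMod (A k) r ≤ Real.exp (r ^ s) := by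
      rw [Filter.eventually_all_finset]
      intro k hk
      exact eventually_maxMod_le_exp_rpow (hord k (Finset.mem_range.mp hk)) hρs
    have hlog_rpow : ∀ᶠ r : ℝ in Filter.atTop, Real.log r ≤ r ^ s := by
      filter_upwards [(_root_.isLittleO_log_rpow_atTop hs0).bound one_pos,
        Filter.eventually_gt_atTop (1 : ℝ)] with r hle hr1
      have h1 : |Real.log r| ≤ 1 * |r ^ s| := by
        simpa [Real.norm_eq_abs] using hle
      calc Real.log r ≤ |Real.log r| := le_abs_self _
        _ ≤ |r ^ s| := by linarith
        _ = r ^ s := abs_of_nonneg (Real.rpow_nonneg (by linarith) s)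
    set B := ‖(fun j : Fin m => iteratedDeriv (j : ℕ) f 0)‖ with hBdef
    have hB0 : 0 ≤ B := norm_nonneg _
    set B' := max B 1 with hB'def
    have hB'1 : 1 ≤ B' := le_max_right _ _
    have hconstpow : ∀ᶠ r : ℝ in Filter.atTop, Real.log (2 + m) ≤ r ^ s :=
      (_root_.tendsto_rpow_atTop hs0).eventually_ge_atTop _
    have hlog3 : ∀ᶠ r : ℝ in Filter.atTop, Real.log 3 ≤ (t - s) * Real.log r := by
      have h1 : Filter.Tendsto (fun r : ℝ => (t - s) * Real.log r) Filter.atTop Filter.atTop :=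
        Real.tendsto_log_atTop.const_mul_atTop (by linarith)
      exact h1.eventually_ge_atTop _
    have hev : ∀ᶠ r : ℝ in Filter.atTop,
        ((Real.log (Real.log (Real.log (maxMod f r))) / Real.log r : ℝ) : EReal)
          ≤ ((t : ℝ) : EReal) := by
      filter_upwards [hA, hlog_rpow, hconstpow, hlog3,
        Filter.eventually_ge_atTop (max r0 2),
        Filter.eventually_ge_atTop (Real.log B')] with r hAr hlr hCr hl3 hrr hrB
      have hr2 : (2 : ℝ) ≤ r := le_trans (le_max_right _ _) hrr
      have hrr0 : r0 ≤ r := le_trans (le_max_left _ _) hrr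
      have hr0' : (0 : ℝ) < r := by linarith
      have hlogr : 0 < Real.log r := Real.log_pos (by linarith)
      have hrs0 : 0 < r ^ s := Real.rpow_pos_of_pos hr0' s
      have hrs1 : 1 ≤ r ^ s := Real.one_le_rpow (by linarith) hs0.le
      set M := maxMod f r with hMdef
      have hMee : Real.exp (Real.exp 1) ≤ M :=
        le_trans hr0 (maxMod_mono hf (by linarith) hrr0)
      have hM0 : 0 < M := lt_of_lt_of_le (Real.exp_pos _) hMee
      -- the key bound
      have hKb := sol_maxMod_bound m hm A hAent f hf hsol (le_of_lt hr0')
      have hsum : (∑ k ∈ Finset.range m, maxMod (A k) r) ≤ m * Real.exp (r ^ s) := by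
        calc (∑ k ∈ Finset.range m, maxMod (A k) r)
            ≤ ∑ _k ∈ Finset.range m, Real.exp (r ^ s) :=
              Finset.sum_le_sum hAr
          _ = m * Real.exp (r ^ s) := by
              rw [Finset.sum_const, Finset.card_range, nsmul_eq_mul]
      have hexp1 : (1 : ℝ) ≤ Real.exp (r ^ s) := Real.one_le_exp hrs0.le
      have hMle : M ≤ B' * Real.exp ((1 + m * Real.exp (r ^ s)) * r) := by
        calc M ≤ B * Real.exp ((1 + ∑ k ∈ Finset.range m, maxMod (A k) r) * r) := hKb
          _ ≤ B' * Real.exp ((1 + m * Real.exp (r ^ s)) * r) := by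
              apply mul_le_mul (le_max_left _ _) _ (Real.exp_pos _).le (by linarith)
              apply Real.exp_le_exp.mpr
              apply mul_le_mul_of_nonneg_right _ (by linarith)
              linarith
      -- first log
      have hlogM : Real.log M ≤ (2 + m) * (r * Real.exp (r ^ s)) := by
        have h1 : Real.log M ≤ Real.log (B' * Real.exp ((1 + m * Real.exp (r ^ s)) * r)) :=
          (Real.log_le_log_iff hM0 (by positivity)).mpr hMle
        rw [Real.log_mul (by linarith) (Real.exp_ne_zero _), Real.log_exp] at h1
        have h2 : Real.log B' ≤ r := hrB
        have h3 : r ≤ r * Real.exp (r ^ s) := le_mul_of_one_le_right hr0'.le hexp1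
        nlinarith [Nat.cast_nonneg (α := ℝ) m, Real.exp_pos (r ^ s)]
      have hlogM1 : Real.exp 1 ≤ Real.log M :=
        (Real.le_log_iff_exp_le hM0).mpr hMee
      have hlogM0 : 0 < Real.log M := lt_of_lt_of_le (Real.exp_pos 1) hlogM1
      -- second log
      have hllM : Real.log (Real.log M) ≤ 3 * r ^ s := by
        have h1 : Real.log (Real.log M) ≤ Real.log ((2 + m) * (r * Real.exp (r ^ s))) :=
          (Real.log_le_log_iff hlogM0 (by positivity)).mpr hlogM
        rw [Real.log_mul (by positivity) (by positivity),
          Real.log_mul (by positivity) (Real.exp_ne_zero _), Real.log_exp] at h1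
        linarith
      have hllM1 : 1 ≤ Real.log (Real.log M) := by
        have := (Real.le_log_iff_exp_le hlogM0).mpr hlogM1
        calc (1:ℝ) = Real.log (Real.exp 1) := (Real.log_exp 1).symm
          _ ≤ Real.log (Real.log M) :=
            (Real.log_le_log_iff (Real.exp_pos 1) hlogM0).mpr hlogM1
      have hllM0 : 0 < Real.log (Real.log M) := by linarith
      -- third log
      have hlllM : Real.log (Real.log (Real.log M)) ≤ t * Real.log r := by
        have h1 : Real.log (Real.log (Real.log M)) ≤ Real.log (3 * r ^ s) :=
          (Real.log_le_log_iff hllM0 (by positivity)).mpr hllM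
        rw [Real.log_mul (by norm_num) (by positivity), Real.log_rpow hr0'] at h1
        linarith
      rw [EReal.coe_le_coe_iff]
      rw [div_le_iff₀ hlogr]
      exact hlllM
    exact Filter.limsup_le_of_le (by isBoundedDefault) hev
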